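/- arXiv:1808.06100 — 4 statements merged into one kernel-verified Lean document; each statement's English description precedes it below -/
import Mathlib

section
/- (Frank–Wolfe type theorem) Let K ⊆ ℝ^n be a nonempty closed set and f : ℝ^n → ℝ a polynomial of degree d ≥ 1. If the problem OP(K,f) is regular (i.e., Sol(K∞, f_d) is bounded) and f is bounded from below on K, then f is coercive on K (f(x) → +∞ as x ∈ K, ‖x‖ → +∞) and consequently the solution set Sol(K,f) is nonempty and compact. -/
open Filter Topology MvPolynomial Bornology
open scoped RealInnerProductSpace Pointwise

noncomputable section

/-- `ℝ^n` as Euclidean space. -/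
abbrev En (n : ℕ) := EuclideanSpace ℝ (Fin n)

/-- Evaluation of a multivariate polynomial at a point of `ℝ^n`. -/
def evalP {n : ℕ} (f : MvPolynomial (Fin n) ℝ) (x : En n) : ℝ :=
  MvPolynomial.eval (fun i => x i) f

/-- `Sol(C,g)`: the set of global minimizers of `g` on `C`. -/
def solSet {n : ℕ} (C : Set (En n)) (g : En n → ℝ) : Set (En n) :=
  {x ∈ C | ∀ y ∈ C, g x ≤ g y}

/-- `K∞`: the asymptotic cone of `K`. -/
def asympCone {n : ℕ} (K : Set (En n)) : Set (En n) :=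
  {v | ∃ (t : ℕ → ℝ) (x : ℕ → En n), (∀ k, x k ∈ K) ∧
    Tendsto t atTop atTop ∧ Tendsto (fun k => (t k)⁻¹ • x k) atTop (𝓝 v)}

/-- The gradient `∇f` of a polynomial, via its partial derivatives. -/
def polyGrad {n : ℕ} (f : MvPolynomial (Fin n) ℝ) (x : En n) : En n :=
  WithLp.toLp 2 (fun i => MvPolynomial.eval (fun j => x j) (MvPolynomial.pderiv i f))

/-- The `ℓ2`-norm of the coefficient vector of a polynomial. -/
def l2Norm {n : ℕ} (p : MvPolynomial (Fin n) ℝ) : ℝ :=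
  Real.sqrt (∑ m ∈ p.support, (MvPolynomial.coeff m p) ^ 2)

/-- `S` is generic (residual) in `X`: it contains a countable intersection of sets, each of
which is open and dense in `X` (with respect to the `ℓ2` coefficient metric). -/
def IsGenericIn {n : ℕ} (X S : Set (MvPolynomial (Fin n) ℝ)) : Prop :=
  ∃ D : ℕ → Set (MvPolynomial (Fin n) ℝ),
    (∀ k, D k ⊆ X ∧
      (∀ g ∈ D k, ∃ ε > 0, ∀ g' ∈ X, l2Norm (g' - g) < ε → g' ∈ D k) ∧
      (∀ g ∈ X, ∀ ε > 0, ∃ g' ∈ D k, l2Norm (g' - g) < ε)) ∧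
    X ∩ (⋂ k, D k) ⊆ S

/-! If `f` is bounded below on `K`, dividing `f(x_k)` by `t_k ^ d` along `x_k / t_k → v` shows
`f_d ≥ 0` on `K∞`. A zero `v ≠ 0` of `f_d` in `K∞` would then, by homogeneity, put the whole ray
`ℝ₊ v` into `Sol(K∞, f_d)`, so regularity forces `f_d > 0` on `K∞ \ {0}`. If `f` were not coercive
on `K`, some `x_k ∈ K` with `‖x_k‖ → ∞` and `f(x_k) ≤ M` would have a normalized limit point `v`
in `K∞` on the unit sphere with `f_d(v) ≤ 0`. Coercivity makes the sublevel sets of `f` on `K`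
compact, which yields the minimizers. -/

section

variable {n : ℕ}

theorem continuous_evalP (p : MvPolynomial (Fin n) ℝ) : Continuous (evalP p) :=
  (continuous_eval p).comp (PiLp.continuous_ofLp 2 _)

theorem MvPolynomial.IsHomogeneous.evalP_smul {j : ℕ} {p : MvPolynomial (Fin n) ℝ}
    (hp : p.IsHomogeneous j) (c : ℝ) (x : En n) : evalP p (c • x) = c ^ j * evalP p x := by
  simp only [evalP, eval_eq, Finset.mul_sum]
  refine Finset.sum_congr rfl fun m hm => ?_
  have hdeg : ∑ i ∈ m.support, m i = j := by
    simpa [Finsupp.weight_apply, Finsupp.sum] using hp (mem_support_iff.mp hm)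
  simp only [PiLp.smul_apply, smul_eq_mul, mul_pow, Finset.prod_mul_distrib,
    Finset.prod_pow_eq_pow_sum, hdeg]
  ring

theorem evalP_smul_eq_sum {d : ℕ} {f : MvPolynomial (Fin n) ℝ} (hf : f.totalDegree ≤ d)
    (c : ℝ) (x : En n) :
    evalP f (c • x) = ∑ j ∈ Finset.range (d + 1), c ^ j * evalP (homogeneousComponent j f) x := by
  have hsum : ∑ j ∈ Finset.range (d + 1), homogeneousComponent j f = f := by
    rw [← Finset.sum_range_add_sum_Ico _ (by omega : f.totalDegree + 1 ≤ d + 1),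
      sum_homogeneousComponent, add_eq_left]
    refine Finset.sum_eq_zero fun j hj => homogeneousComponent_eq_zero _ _ ?_
    rw [Finset.mem_Ico] at hj
    omega
  conv_lhs => rw [← hsum]
  simp only [evalP, map_sum]
  exact Finset.sum_congr rfl fun j _ => (homogeneousComponent_isHomogeneous j f).evalP_smul c x

theorem tendsto_evalP_div_pow {ι : Type*} {l : Filter ι} {d : ℕ} {f : MvPolynomial (Fin n) ℝ}
    (hf : f.totalDegree ≤ d) {t : ι → ℝ} {y : ι → En n} {w : En n} (ht : Tendsto t l atTop)
    (hy : Tendsto (fun k => (t k)⁻¹ • y k) l (𝓝 w)) :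
    Tendsto (fun k => evalP f (y k) / t k ^ d) l (𝓝 (evalP (homogeneousComponent d f) w)) := by
  have hexpand : ∀ᶠ k in l, evalP f (y k) / t k ^ d = ∑ j ∈ Finset.range (d + 1),
      (t k)⁻¹ ^ (d - j) * evalP (homogeneousComponent j f) ((t k)⁻¹ • y k) := by
    filter_upwards [ht.eventually_gt_atTop 0] with k hk
    conv_lhs => rw [← smul_inv_smul₀ hk.ne' (y k), evalP_smul_eq_sum hf, Finset.sum_div]
    refine Finset.sum_congr rfl fun j hj => ?_
    rw [← Nat.sub_add_cancel (Finset.mem_range_succ_iff.mp hj), pow_add, Nat.add_sub_cancel,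
      inv_pow]
    field_simp
  have hlim : Tendsto (fun k => ∑ j ∈ Finset.range (d + 1),
      (t k)⁻¹ ^ (d - j) * evalP (homogeneousComponent j f) ((t k)⁻¹ • y k)) l
      (𝓝 (∑ j ∈ Finset.range (d + 1), 0 ^ (d - j) * evalP (homogeneousComponent j f) w)) :=
    tendsto_finsetSum _ fun j _ =>
      (ht.inv_tendsto_atTop.pow _).mul (((continuous_evalP _).tendsto w).comp hy)
  have hvalue : ∑ j ∈ Finset.range (d + 1), (0 : ℝ) ^ (d - j) * evalP (homogeneousComponent j f) w
      = evalP (homogeneousComponent d f) w := by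
    rw [Finset.sum_eq_single_of_mem d (Finset.self_mem_range_succ d) fun j hj hjd => ?_]
    · simp
    · rw [zero_pow (by rw [Finset.mem_range_succ_iff] at hj; omega), zero_mul]
  exact (hvalue ▸ hlim).congr' (hexpand.mono fun _ h => h.symm)

theorem smul_mem_asympCone {K : Set (En n)} {c : ℝ} (hc : 0 < c) {v : En n}
    (hv : v ∈ asympCone K) : c • v ∈ asympCone K := by
  obtain ⟨t, x, hxK, ht, hx⟩ := hv
  refine ⟨fun k => c⁻¹ * t k, x, hxK, ht.const_mul_atTop (inv_pos.2 hc), ?_⟩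
  refine (hx.const_smul c).congr fun k => ?_
  rw [mul_inv, inv_inv, mul_smul, smul_comm]

theorem evalP_homogeneousComponent_nonneg_of_bddBelow {K : Set (En n)} {d : ℕ} (hd : d ≠ 0)
    {f : MvPolynomial (Fin n) ℝ} (hf : f.totalDegree ≤ d) (hbdd : BddBelow (evalP f '' K))
    {w : En n} (hw : w ∈ asympCone K) : 0 ≤ evalP (homogeneousComponent d f) w := by
  obtain ⟨m, hm⟩ := hbdd
  obtain ⟨t, x, hxK, ht, hx⟩ := hw
  have htd : Tendsto (fun k => t k ^ d) atTop atTop := (tendsto_pow_atTop hd).comp ht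
  refine le_of_tendsto_of_tendsto ((tendsto_const_nhds (x := m)).div_atTop htd)
    (tendsto_evalP_div_pow hf ht hx) ?_
  filter_upwards [htd.eventually_gt_atTop 0] with k hk
  exact div_le_div_of_nonneg_right (hm ⟨x k, hxK k, rfl⟩) hk.le

theorem evalP_pos_of_isBounded_solSet {K : Set (En n)} {d : ℕ} {g : MvPolynomial (Fin n) ℝ}
    (hg : g.IsHomogeneous d) (hnonneg : ∀ w ∈ asympCone K, 0 ≤ evalP g w)
    (hreg : IsBounded (solSet (asympCone K) (evalP g))) {v : En n} (hv : v ∈ asympCone K)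
    (hv0 : v ≠ 0) : 0 < evalP g v := by
  refine (hnonneg v hv).lt_of_ne' fun hzero => ?_
  have hray : ∀ c : ℝ, 0 < c → c • v ∈ solSet (asympCone K) (evalP g) := fun c hc =>
    ⟨smul_mem_asympCone hc hv, fun y hy => by
      rw [hg.evalP_smul, hzero, mul_zero]
      exact hnonneg y hy⟩
  obtain ⟨C, hC⟩ := isBounded_iff_forall_norm_le.mp hreg
  have hvpos : 0 < ‖v‖ := norm_pos_iff.mpr hv0
  have hfar := hC _ (hray ((|C| + 1) / ‖v‖) (by positivity))
  rw [norm_smul, Real.norm_of_nonneg (by positivity), div_mul_cancel₀ _ hvpos.ne'] at hfar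
  linarith [le_abs_self C]

def CoerciveOn {E : Type*} [Norm E] (g : E → ℝ) (K : Set E) : Prop :=
  ∀ M : ℝ, ∃ R : ℝ, ∀ x ∈ K, R < ‖x‖ → M < g x

theorem coerciveOn_of_isBounded_solSet {K : Set (En n)} {d : ℕ} (hd : d ≠ 0)
    {f : MvPolynomial (Fin n) ℝ} (hf : f.totalDegree ≤ d)
    (hreg : IsBounded (solSet (asympCone K) (evalP (homogeneousComponent d f))))
    (hbdd : BddBelow (evalP f '' K)) : CoerciveOn (evalP f) K := by
  intro M
  by_contra! hM
  choose x hxK hxR hxM using fun k : ℕ => hM k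
  have hx0 : ∀ k, x k ≠ 0 := fun k => norm_pos_iff.mp ((Nat.cast_nonneg k).trans_lt (hxR k))
  obtain ⟨v, hv, φ, hφ, hlim⟩ := (isCompact_sphere (0 : En n) 1).tendsto_subseq
    (x := fun k => ‖x k‖⁻¹ • x k) fun k => by simp [norm_smul, hx0 k]
  have ht : Tendsto (fun k => ‖x (φ k)‖) atTop atTop := tendsto_atTop_mono
    (fun k => (hxR (φ k)).le) (tendsto_natCast_atTop_atTop.comp hφ.tendsto_atTop)
  have hvK : v ∈ asympCone K := ⟨_, x ∘ φ, fun k => hxK _, ht, hlim⟩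
  have htd := (tendsto_pow_atTop hd).comp ht
  have hle : evalP (homogeneousComponent d f) v ≤ 0 := by
    refine le_of_tendsto_of_tendsto (tendsto_evalP_div_pow hf ht hlim)
      ((tendsto_const_nhds (x := M)).div_atTop htd) ?_
    filter_upwards [htd.eventually_gt_atTop 0] with k hk
    exact div_le_div_of_nonneg_right (hxM _) hk.le
  have hpos := evalP_pos_of_isBounded_solSet (homogeneousComponent_isHomogeneous d f)
    (fun w hw => evalP_homogeneousComponent_nonneg_of_bddBelow hd hf hbdd hw) hreg hvK
    (ne_zero_of_mem_unit_sphere ⟨v, hv⟩)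
  linarith

theorem isCompact_sublevel_of_coerciveOn {E : Type*} [NormedAddCommGroup E] [ProperSpace E]
    {K : Set E} {g : E → ℝ} (hK : IsClosed K) (hg : Continuous g) (hcoer : CoerciveOn g K)
    (M : ℝ) : IsCompact {x ∈ K | g x ≤ M} := by
  obtain ⟨R, hR⟩ := hcoer M
  refine Metric.isCompact_of_isClosed_isBounded (hK.inter (isClosed_le hg continuous_const))
    ((Metric.isBounded_closedBall (x := 0) (r := R)).subset fun x hx => ?_)
  rw [mem_closedBall_zero_iff]
  exact le_of_not_gt fun h => (hR x hx.1 h).not_ge hx.2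

theorem solSet_nonempty_and_isCompact_of_coerciveOn {K : Set (En n)} {g : En n → ℝ}
    (hK : IsClosed K) (hKne : K.Nonempty) (hg : Continuous g) (hcoer : CoerciveOn g K) :
    (solSet K g).Nonempty ∧ IsCompact (solSet K g) := by
  obtain ⟨x₀, hx₀⟩ := hKne
  obtain ⟨x, hx, hmin⟩ := (isCompact_sublevel_of_coerciveOn hK hg hcoer (g x₀)).exists_isMinOn
    ⟨x₀, hx₀, le_rfl⟩ hg.continuousOn
  have hxsol : x ∈ solSet K g := ⟨hx.1, fun y hy => (le_total (g y) (g x₀)).elim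
    (fun h => isMinOn_iff.mp hmin y ⟨hy, h⟩) (fun h => hx.2.trans h)⟩
  have hsol : solSet K g = {y ∈ K | g y ≤ g x} := Set.ext fun y =>
    ⟨fun hy => ⟨hy.1, hy.2 x hxsol.1⟩, fun hy => ⟨hy.1, fun z hz => hy.2.trans (hxsol.2 z hz)⟩⟩
  exact ⟨⟨x, hxsol⟩, hsol ▸ isCompact_sublevel_of_coerciveOn hK hg hcoer _⟩

end

/-- Frank–Wolfe type theorem: if `OP(K,f)` is regular (i.e. `Sol(K∞, f_d)` is bounded) and `f`
is bounded from below on `K`, then `f` is coercive on `K` and `Sol(K,f)` is nonempty and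
compact. -/
theorem stmt2 {n d : ℕ} (hd : 1 ≤ d) (K : Set (En n)) (hKne : K.Nonempty) (hKcl : IsClosed K)
    (f : MvPolynomial (Fin n) ℝ) (hdeg : f.totalDegree = d)
    (hreg : IsBounded (solSet (asympCone K) (evalP (homogeneousComponent d f))))
    (hbdd : BddBelow (evalP f '' K)) :
    (∀ M : ℝ, ∃ R : ℝ, ∀ x ∈ K, R < ‖x‖ → M < evalP f x) ∧
    (solSet K (evalP f)).Nonempty ∧ IsCompact (solSet K (evalP f)) := by
  have hcoer := coerciveOn_of_isBounded_solSet (by omega) hdeg.le hreg hbdd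
  exact ⟨hcoer, solSet_nonempty_and_isCompact_of_coerciveOn hKcl hKne (continuous_evalP f) hcoer⟩

end
end

section
/- (Eaves type theorem, necessity) Let K ⊆ ℝ^n be a nonempty closed convex set and f : ℝ^n → ℝ a polynomial of degree d ≥ 1 that is pseudoconvex on K, and suppose OP(K,f) is non-regular (i.e., Sol(K∞, f_d) is unbounded). If Sol(K,f) is nonempty and compact, then for every v ∈ Sol(K∞, f_d) \ {0} there exists x ∈ K with ⟨∇f(x), v⟩ > 0. -/
open Filter Topology MvPolynomial Bornology
open scoped RealInnerProductSpace Pointwise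

noncomputable section

/-! If no such `x` existed, then `⟪∇f(y), v⟫ ≤ 0` on `K`. Take a minimizer `x₀`; the ray
`x₀ + c v` (`c ≥ 0`) stays in `K` because `v` is a recession direction of the closed convex set
`K`, and `⟪∇f(x₀ + c v), x₀ - (x₀ + c v)⟫ = -c ⟪∇f(x₀ + c v), v⟫ ≥ 0`, so pseudoconvexity gives
`f(x₀ + c v) ≤ f(x₀)`. Hence the whole ray consists of minimizers, contradicting compactness of
`Sol(K,f)`. -/

theorem add_smul_mem_of_mem_asympCone {n : ℕ} {K : Set (En n)} (hKcl : IsClosed K)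
    (hKcv : Convex ℝ K) {p v : En n} (hp : p ∈ K) (hv : v ∈ asympCone K) {c : ℝ} (hc : 0 ≤ c) :
    p + c • v ∈ K := by
  obtain ⟨t, x, hxK, ht, hlim⟩ := hv
  have hct : Tendsto (fun k => c / t k) atTop (𝓝 0) := by
    simpa [div_eq_mul_inv] using ht.inv_tendsto_atTop.const_mul c
  -- `p + c • v` is the limit of the points `(1 - c/tₖ) p + (c/tₖ) xₖ` of `K`.
  have hconv : Tendsto (fun k => (1 - c / t k) • p + (c / t k) • x k) atTop
      (𝓝 (p + c • v)) := by
    refine Tendsto.add ?_ ?_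
    · simpa using ((tendsto_const_nhds (x := (1 : ℝ))).sub hct).smul_const p
    · exact (hlim.const_smul c).congr fun k => by simp [div_eq_mul_inv, smul_smul]
  refine hKcl.mem_of_tendsto hconv ?_
  filter_upwards [ht.eventually_ge_atTop (max c 1)] with k hk
  have htk : 0 < t k := lt_of_lt_of_le one_pos ((le_max_right c 1).trans hk)
  have hle : c / t k ≤ 1 := (div_le_one htk).mpr ((le_max_left c 1).trans hk)
  exact hKcv hp (hxK k) (by linarith) (div_nonneg hc htk.le) (by ring)

theorem add_smul_mem_solSet_of_inner_nonpos {n : ℕ} {K : Set (En n)} {g : En n → ℝ}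
    {grad : En n → En n} (hpc : ∀ x ∈ K, ∀ y ∈ K, 0 ≤ ⟪grad x, y - x⟫ → g x ≤ g y)
    {x v : En n} (hx : x ∈ solSet K g) {c : ℝ} (hc : 0 ≤ c) (hxv : x + c • v ∈ K)
    (hgrad : ⟪grad (x + c • v), v⟫ ≤ 0) : x + c • v ∈ solSet K g := by
  have hdesc : 0 ≤ ⟪grad (x + c • v), x - (x + c • v)⟫ := by
    rw [sub_add_cancel_left, inner_neg_right, real_inner_smul_right]
    nlinarith
  exact ⟨hxv, fun y hy => (hpc _ hxv _ hx.1 hdesc).trans (hx.2 y hy)⟩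

theorem not_isBounded_of_forall_add_smul_mem {E : Type*} [NormedAddCommGroup E]
    [NormedSpace ℝ E] {S : Set E} {x v : E} (hv : v ≠ 0)
    (hS : ∀ c : ℝ, 0 ≤ c → x + c • v ∈ S) : ¬ IsBounded S := by
  rw [isBounded_iff_forall_norm_le]
  rintro ⟨C, hC⟩
  have hvpos : 0 < ‖v‖ := norm_pos_iff.mpr hv
  set c := (C + ‖x‖ + 1) / ‖v‖
  have hx : ‖x‖ ≤ C := by simpa using hC _ (hS 0 le_rfl)
  have hc : 0 ≤ c := div_nonneg (by linarith [norm_nonneg x]) hvpos.le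
  have hcv : c * ‖v‖ = C + ‖x‖ + 1 := div_mul_cancel₀ _ hvpos.ne'
  have hnorm : c * ‖v‖ ≤ ‖x + c • v‖ + ‖x‖ := by
    calc c * ‖v‖ = ‖(x + c • v) - x‖ := by rw [add_sub_cancel_left, norm_smul,
            Real.norm_of_nonneg hc]
      _ ≤ ‖x + c • v‖ + ‖x‖ := norm_sub_le _ _
  linarith [hC _ (hS c hc)]

theorem stmt6_general {n d : ℕ} (K : Set (En n)) (hKcl : IsClosed K)
    (hKcv : Convex ℝ K) (f : MvPolynomial (Fin n) ℝ)
    (hpc : ∀ x ∈ K, ∀ y ∈ K, 0 ≤ ⟪polyGrad f x, y - x⟫ → evalP f x ≤ evalP f y)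
    (hb : (solSet K (evalP f)).Nonempty ∧ IsCompact (solSet K (evalP f))) :
    ∀ v ∈ solSet (asympCone K) (evalP (homogeneousComponent d f)), v ≠ 0 →
      ∃ x ∈ K, 0 < ⟪polyGrad f x, v⟫ := by
  intro v hv hv0
  by_contra! hgrad
  obtain ⟨⟨x₀, hx₀⟩, hcpt⟩ := hb
  refine not_isBounded_of_forall_add_smul_mem (x := x₀) hv0 (fun c hc => ?_) hcpt.isBounded
  have hmem := add_smul_mem_of_mem_asympCone hKcl hKcv hx₀.1 hv.1 hc
  exact add_smul_mem_solSet_of_inner_nonpos hpc hx₀ hc hmem (hgrad _ hmem)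

/-- Eaves type theorem (necessity): if `K` is nonempty closed convex, `f` is a pseudoconvex
polynomial of degree `d ≥ 1` on `K`, `OP(K,f)` is non-regular, and `Sol(K,f)` is nonempty and
compact, then for every nonzero `v ∈ Sol(K∞, f_d)` there is `x ∈ K` with `⟨∇f(x), v⟩ > 0`. -/
theorem stmt6 {n d : ℕ} (hd : 1 ≤ d) (K : Set (En n)) (hKne : K.Nonempty) (hKcl : IsClosed K)
    (hKcv : Convex ℝ K) (f : MvPolynomial (Fin n) ℝ) (hdeg : f.totalDegree = d)
    (hpc : ∀ x ∈ K, ∀ y ∈ K, 0 ≤ ⟪polyGrad f x, y - x⟫ → evalP f x ≤ evalP f y)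
    (hnonreg : ¬ IsBounded (solSet (asympCone K) (evalP (homogeneousComponent d f))))
    (hb : (solSet K (evalP f)).Nonempty ∧ IsCompact (solSet K (evalP f))) :
    ∀ v ∈ solSet (asympCone K) (evalP (homogeneousComponent d f)), v ≠ 0 →
      ∃ x ∈ K, 0 < ⟪polyGrad f x, v⟫ :=
  stmt6_general K hKcl hKcv f hpc hb

end
end

section
/- Fix d ≥ 1 and n ≥ 1. For every nonzero x ∈ ℝ^n, the linear map from the space H_d of homogeneous real polynomials of degree d in n variables to ℝ^n given by h ↦ ∇h(x) (the gradient of h evaluated at x) is surjective; equivalently, writing h = bᵀX_d(x) with coefficient vector b ∈ ℝ^η, the Jacobian matrix D_b[∇(bᵀX_d(x))] has rank n for all x ≠ 0. -/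
open Filter Topology MvPolynomial Bornology
open scoped RealInnerProductSpace Pointwise

noncomputable section

/-! With `ℓ_p(y) = ⟪p, y⟫`, the product and power rules give
`∇(ℓ_x ^ d)(x) = d ‖x‖^(2(d-1)) x` and
`∇(ℓ_v ℓ_x ^ (d-1))(x) = ‖x‖^(2(d-1)) v + (d-1) ⟪v, x⟫ ‖x‖^(2(d-2)) x`.
The image of the linear map `h ↦ ∇h(x)` on `H_d` therefore contains `x`, and then every `v`. -/

section

variable {n : ℕ}

def gradAt (x : En n) : MvPolynomial (Fin n) ℝ →ₗ[ℝ] En n :=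
  (EuclideanSpace.equiv (Fin n) ℝ).symm.toLinearMap ∘ₗ
    LinearMap.pi fun i => (aeval fun j => x j).toLinearMap ∘ₗ (pderiv i).toLinearMap

theorem gradAt_apply (x : En n) (f : MvPolynomial (Fin n) ℝ) : gradAt x f = polyGrad f x := rfl

theorem evalP_pow (f : MvPolynomial (Fin n) ℝ) (m : ℕ) (x : En n) :
    evalP (f ^ m) x = evalP f x ^ m :=
  map_pow _ _ _

theorem polyGrad_mul (f g : MvPolynomial (Fin n) ℝ) (x : En n) :
    polyGrad (f * g) x = evalP f x • polyGrad g x + evalP g x • polyGrad f x := by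
  ext i
  simp [polyGrad, evalP, Derivation.leibniz]

theorem polyGrad_pow (f : MvPolynomial (Fin n) ℝ) (m : ℕ) (x : En n) :
    polyGrad (f ^ m) x = (m * evalP f x ^ (m - 1)) • polyGrad f x := by
  ext i
  simp [polyGrad, evalP, Derivation.leibniz_pow, mul_assoc]

def linForm (p : En n) : MvPolynomial (Fin n) ℝ := ∑ j, C (p j) * X j

theorem isHomogeneous_linForm (p : En n) : (linForm p).IsHomogeneous 1 :=
  IsHomogeneous.sum _ _ _ fun _ _ => isHomogeneous_C_mul_X _ _

theorem isHomogeneous_linForm_mul_linForm_pow (p q : En n) (m : ℕ) :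
    (linForm q * linForm p ^ m).IsHomogeneous (m + 1) := by
  simpa [add_comm] using (isHomogeneous_linForm q).mul ((isHomogeneous_linForm p).pow m)

theorem evalP_linForm (p x : En n) : evalP (linForm p) x = ⟪p, x⟫ := by
  simp [evalP, linForm, PiLp.inner_apply, mul_comm]

theorem polyGrad_linForm (p x : En n) : polyGrad (linForm p) x = p := by
  ext i
  simp [polyGrad, linForm, pderiv_X, Pi.single_apply]

theorem map_gradAt_homogeneousSubmodule {d : ℕ} (hd : 1 ≤ d) {x : En n} (hx : x ≠ 0) :
    (homogeneousSubmodule (Fin n) ℝ d).map (gradAt x) = ⊤ := by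
  obtain ⟨m, rfl⟩ := Nat.exists_eq_add_one.2 hd
  set M := (homogeneousSubmodule (Fin n) ℝ (m + 1)).map (gradAt x)
  have hS : ⟪x, x⟫ ^ m ≠ 0 := pow_ne_zero _ (inner_self_ne_zero.2 hx)
  have hxM : x ∈ M := by
    have hmem : polyGrad (linForm x ^ (m + 1)) x ∈ M :=
      ⟨_, by simpa using (isHomogeneous_linForm x).pow (m + 1), gradAt_apply _ _⟩
    rw [polyGrad_pow, polyGrad_linForm, evalP_linForm, Nat.add_sub_cancel, Nat.cast_succ] at hmem
    exact (M.smul_mem_iff (mul_ne_zero m.cast_add_one_ne_zero hS)).1 hmem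
  refine eq_top_iff.2 fun v _ => ?_
  have hmem : polyGrad (linForm v * linForm x ^ m) x ∈ M :=
    ⟨_, isHomogeneous_linForm_mul_linForm_pow x v m, gradAt_apply _ _⟩
  rw [polyGrad_mul, polyGrad_pow, polyGrad_linForm, polyGrad_linForm, evalP_pow,
    evalP_linForm, evalP_linForm] at hmem
  have hvM : ⟪x, x⟫ ^ m • v ∈ M :=
    (M.add_mem_iff_right (M.smul_mem _ (M.smul_mem _ hxM))).1 hmem
  exact (M.smul_mem_iff hS).1 hvM

end

theorem stmt16_general {n d : ℕ} (hd : 1 ≤ d) (x : En n) (hx : x ≠ 0) :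
    ∀ v : En n, ∃ h : MvPolynomial (Fin n) ℝ, h.IsHomogeneous d ∧ polyGrad h x = v :=
  fun _ => (map_gradAt_homogeneousSubmodule hd hx).ge Submodule.mem_top

/-- For every nonzero `x ∈ ℝ^n`, the linear map `h ↦ ∇h(x)` from the space of homogeneous
polynomials of degree `d` to `ℝ^n` is surjective. -/
theorem stmt16 {n d : ℕ} (hn : 1 ≤ n) (hd : 1 ≤ d) (x : En n) (hx : x ≠ 0) :
    ∀ v : En n, ∃ h : MvPolynomial (Fin n) ℝ, h.IsHomogeneous d ∧ polyGrad h x = v :=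
  stmt16_general hd x hx

end
end

section
/- Let C = {x ∈ ℝ^n : Ax ≥ 0} be a polyhedral cone, where A ∈ ℝ^{p×n} is a full-rank matrix (its rows are linearly independent), and fix d ≥ 1. Then there exists a generic (residual) set G_d in the space H_d of homogeneous polynomials of degree d such that for every g ∈ G_d, the solution set Sol(C,g) is finite. -/
open Filter Topology MvPolynomial Bornology
open scoped RealInnerProductSpace Pointwise

noncomputable section

/-!
A form `g` of degree `d ≥ 1` that takes a negative value on the cone `C` has no minimizer
on `C`, since `g (2 • x) = 2 ^ d * g x < g x` whenever `g x < 0`; a form that is positive on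
`C \ {0}` has `Sol(C,g) = {0}`. Both conditions are open for the coefficient norm (the second
by compactness of `C ∩ S^{n-1}`), and together they are dense: a form satisfying neither is
`≥ 0` on `C` and `≤ 0` at some `v ≠ 0` of `C`, so subtracting a small multiple of a form
positive at `v` makes it negative there. The constant sequence of this open dense set
witnesses genericity.
-/

namespace MvPolynomial.IsHomogeneous

variable {n d : ℕ} {g : MvPolynomial (Fin n) ℝ}

lemma sum_apply_eq_of_mem_support (hg : g.IsHomogeneous d) {m : Fin n →₀ ℕ}
    (hm : m ∈ g.support) : ∑ i, m i = d := by
  rw [← Finsupp.degree_eq_sum, Finsupp.degree_eq_weight_one]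
  exact hg (mem_support_iff.mp hm)

lemma evalP_smul_s18 (hg : g.IsHomogeneous d) (c : ℝ) (x : En n) :
    evalP g (c • x) = c ^ d * evalP g x := by
  simp only [evalP, eval_eq', Finset.mul_sum, PiLp.smul_apply, smul_eq_mul, mul_pow,
    Finset.prod_mul_distrib, Finset.prod_pow_eq_pow_sum]
  refine Finset.sum_congr rfl fun m hm => ?_
  rw [hg.sum_apply_eq_of_mem_support hm]
  ring

lemma evalP_zero (hg : g.IsHomogeneous d) (hd : d ≠ 0) : evalP g 0 = 0 := by
  simpa [zero_pow hd] using hg.evalP_smul_s18 0 0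

end MvPolynomial.IsHomogeneous

section CoefficientNorm

variable {n d : ℕ}

lemma l2Norm_nonneg (p : MvPolynomial (Fin n) ℝ) : 0 ≤ l2Norm p := Real.sqrt_nonneg _

lemma abs_coeff_le_l2Norm (p : MvPolynomial (Fin n) ℝ) (m : Fin n →₀ ℕ) :
    |coeff m p| ≤ l2Norm p := by
  by_cases hm : m ∈ p.support
  · rw [← Real.sqrt_sq_eq_abs]
    exact Real.sqrt_le_sqrt (Finset.single_le_sum (f := fun m => coeff m p ^ 2)
      (fun _ _ => sq_nonneg _) hm)
  · simpa [notMem_support_iff.mp hm] using l2Norm_nonneg p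

lemma l2Norm_smul (c : ℝ) (p : MvPolynomial (Fin n) ℝ) : l2Norm (c • p) = |c| * l2Norm p := by
  rcases eq_or_ne c 0 with rfl | hc
  · simp [l2Norm]
  · rw [l2Norm, l2Norm, support_smul_eq hc, ← Real.sqrt_sq_eq_abs, ← Real.sqrt_mul (sq_nonneg c),
      Finset.mul_sum]
    simp only [coeff_smul, smul_eq_mul, mul_pow]

def expBox (n d : ℕ) : Finset (Fin n →₀ ℕ) :=
  Finset.Iic (Finsupp.equivFunOnFinite.symm fun _ => d)

lemma support_subset_expBox {p : MvPolynomial (Fin n) ℝ} (hp : p.IsHomogeneous d) :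
    p.support ⊆ expBox n d := by
  intro m hm
  rw [expBox, Finset.mem_Iic]
  intro i
  rw [← hp.sum_apply_eq_of_mem_support hm]
  exact Finset.single_le_sum (fun j _ => Nat.zero_le (m j)) (Finset.mem_univ i)

lemma abs_evalP_le {p : MvPolynomial (Fin n) ℝ} (hp : p.IsHomogeneous d) (x : En n) :
    |evalP p x| ≤ (expBox n d).card * l2Norm p * ‖x‖ ^ d := by
  have hmon : ∀ m ∈ p.support, |∏ i, x i ^ m i| ≤ ‖x‖ ^ d := fun m hm => by
    rw [← hp.sum_apply_eq_of_mem_support hm, ← Finset.prod_pow_eq_pow_sum, Finset.abs_prod]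
    gcongr with i
    rw [abs_pow]
    gcongr
    exact PiLp.norm_apply_le x i
  calc |evalP p x| ≤ ∑ m ∈ p.support, |coeff m p| * |∏ i, x i ^ m i| := by
        rw [evalP, eval_eq']
        exact (Finset.abs_sum_le_sum_abs _ _).trans_eq (by simp only [abs_mul])
    _ ≤ ∑ m ∈ p.support, l2Norm p * ‖x‖ ^ d := Finset.sum_le_sum fun m hm =>
        mul_le_mul (abs_coeff_le_l2Norm p m) (hmon m hm) (abs_nonneg _) (l2Norm_nonneg p)
    _ ≤ (expBox n d).card * (l2Norm p * ‖x‖ ^ d) := by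
        rw [Finset.sum_const, nsmul_eq_mul]
        have := l2Norm_nonneg p
        gcongr
        exact support_subset_expBox hp
    _ = _ := by ring

end CoefficientNorm

lemma evalP_continuous {n : ℕ} (g : MvPolynomial (Fin n) ℝ) : Continuous (evalP g) :=
  (MvPolynomial.continuous_eval g).comp (PiLp.continuous_ofLp 2 _)

lemma exists_isHomogeneous_evalP_pos {n : ℕ} {v : En n} (hv : v ≠ 0) (d : ℕ) :
    ∃ r : MvPolynomial (Fin n) ℝ, r.IsHomogeneous d ∧ 0 < evalP r v := by
  obtain ⟨i, hi⟩ : ∃ i, v i ≠ 0 := by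
    by_contra! h
    exact hv (by ext i; simpa using h i)
  refine ⟨monomial (Finsupp.single i d) (v i ^ d), isHomogeneous_monomial _ (by simp), ?_⟩
  simpa [evalP, eval_monomial] using mul_self_pos.mpr (pow_ne_zero d hi)

lemma isClosed_setOf_mulVec_nonneg {n p : ℕ} (A : Matrix (Fin p) (Fin n) ℝ) :
    IsClosed {x : En n | ∀ i, 0 ≤ A.mulVec (fun j => x j) i} := by
  simp only [Set.ofPred_forall]
  exact isClosed_iInter fun i => isClosed_le continuous_const (by fun_prop)

lemma smul_mem_setOf_mulVec_nonneg {n p : ℕ} (A : Matrix (Fin p) (Fin n) ℝ) (c : ℝ) (hc : 0 ≤ c)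
    (x : En n) (hx : x ∈ {x : En n | ∀ i, 0 ≤ A.mulVec (fun j => x j) i}) :
    c • x ∈ {x : En n | ∀ i, 0 ≤ A.mulVec (fun j => x j) i} := fun i => by
  change 0 ≤ A.mulVec (c • fun j => x j) i
  rw [Matrix.mulVec_smul]
  exact mul_nonneg hc (hx i)

section Copositivity

variable {n d : ℕ} {C : Set (En n)} {g : MvPolynomial (Fin n) ℝ}

def notCopositive (C : Set (En n)) (d : ℕ) : Set (MvPolynomial (Fin n) ℝ) :=
  {g | g.IsHomogeneous d ∧ ∃ x ∈ C, evalP g x < 0}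

def strictlyCopositive (C : Set (En n)) (d : ℕ) : Set (MvPolynomial (Fin n) ℝ) :=
  {g | g.IsHomogeneous d ∧ ∀ x ∈ C, x ≠ 0 → 0 < evalP g x}

lemma solSet_eq_empty_of_mem_notCopositive (hC : ∀ c : ℝ, 0 ≤ c → ∀ x ∈ C, c • x ∈ C)
    (hd : d ≠ 0) (hg : g ∈ notCopositive C d) : solSet C (evalP g) = ∅ := by
  obtain ⟨hg, x₀, hx₀, hneg⟩ := hg
  refine Set.eq_empty_of_forall_notMem fun x ⟨hx, hmin⟩ => ?_
  have hx_neg : evalP g x < 0 := (hmin x₀ hx₀).trans_lt hneg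
  have hle := hmin (2 • x) (hC 2 zero_le_two x hx)
  rw [hg.evalP_smul_s18] at hle
  nlinarith [one_lt_pow₀ (one_lt_two (α := ℝ)) hd]

lemma solSet_subset_zero_of_mem_strictlyCopositive (hC : ∀ c : ℝ, 0 ≤ c → ∀ x ∈ C, c • x ∈ C)
    (hd : d ≠ 0) (hg : g ∈ strictlyCopositive C d) : solSet C (evalP g) ⊆ {0} := by
  intro x ⟨hx, hmin⟩
  by_contra hx0
  have hle := hmin 0 (by simpa using hC 0 le_rfl x hx)
  rw [hg.1.evalP_zero hd] at hle
  exact (hg.2 x hx hx0).not_ge hle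

lemma abs_evalP_sub_le {g' : MvPolynomial (Fin n) ℝ} (hg' : g'.IsHomogeneous d)
    (hg : g.IsHomogeneous d) (x : En n) :
    |evalP g' x - evalP g x| ≤ (expBox n d).card * l2Norm (g' - g) * ‖x‖ ^ d := by
  simpa only [evalP, map_sub] using abs_evalP_le (hg'.sub hg) x

lemma exists_l2Ball_subset_notCopositive (hg : g ∈ notCopositive C d) :
    ∃ ε > 0, ∀ g', g'.IsHomogeneous d → l2Norm (g' - g) < ε → g' ∈ notCopositive C d := by
  obtain ⟨hg, x₀, hx₀, hneg⟩ := hg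
  set K : ℝ := (expBox n d).card * ‖x₀‖ ^ d
  have hK : 0 ≤ K := by positivity
  refine ⟨-evalP g x₀ / (K + 1), by apply div_pos <;> linarith, fun g' hg' hlt => ?_⟩
  have hclose := (abs_le.mp (abs_evalP_sub_le hg' hg x₀)).2
  have hsmall := (lt_div_iff₀ (by linarith)).mp hlt
  refine ⟨hg', x₀, hx₀, ?_⟩
  nlinarith [l2Norm_nonneg (g' - g)]

lemma exists_l2Ball_subset_strictlyCopositive (hclosed : IsClosed C)
    (hC : ∀ c : ℝ, 0 ≤ c → ∀ x ∈ C, c • x ∈ C) (hg : g ∈ strictlyCopositive C d) :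
    ∃ ε > 0, ∀ g', g'.IsHomogeneous d → l2Norm (g' - g) < ε → g' ∈ strictlyCopositive C d := by
  obtain ⟨hg, hpos⟩ := hg
  set B : ℝ := ((expBox n d).card : ℝ)
  obtain ⟨δ, hδ, hδle⟩ := (isCompact_sphere (0 : En n) 1).inter_left hclosed
    |>.exists_forall_le' (evalP_continuous g).continuousOn
      fun u hu => hpos u hu.1 (ne_zero_of_mem_unit_sphere ⟨u, hu.2⟩)
  refine ⟨δ / (B + 1), by positivity, fun g' hg' hlt => ⟨hg', fun x hx hx0 => ?_⟩⟩
  set u := ‖x‖⁻¹ • x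
  have hu : u ∈ C ∩ Metric.sphere 0 1 :=
    ⟨hC _ (by positivity) x hx, by
      rw [mem_sphere_zero_iff_norm, norm_smul, norm_inv, norm_norm,
        inv_mul_cancel₀ (norm_ne_zero_iff.mpr hx0)]⟩
  have hclose := (abs_le.mp (abs_evalP_sub_le hg' hg u)).1
  have hsmall := (lt_div_iff₀ (by positivity)).mp hlt
  rw [mem_sphere_zero_iff_norm.mp hu.2, one_pow, mul_one] at hclose
  have hgu : 0 < evalP g' u := by
    nlinarith [hδle u hu, l2Norm_nonneg (g' - g)]
  rw [← smul_inv_smul₀ (norm_ne_zero_iff.mpr hx0) x, hg'.evalP_smul_s18]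
  exact mul_pos (pow_pos (norm_pos_iff.mpr hx0) d) hgu

lemma exists_l2Norm_sub_lt_mem_union (hg : g.IsHomogeneous d) {ε : ℝ} (hε : 0 < ε) :
    ∃ g' ∈ notCopositive C d ∪ strictlyCopositive C d, l2Norm (g' - g) < ε := by
  by_cases hU : g ∈ strictlyCopositive C d
  · exact ⟨g, Or.inr hU, by simpa [l2Norm] using hε⟩
  simp only [strictlyCopositive, Set.mem_ofPred_eq, not_and, not_forall, not_lt] at hU
  obtain ⟨v, hv, hv0, hgv⟩ := hU hg
  obtain ⟨r, hr, hrv⟩ := exists_isHomogeneous_evalP_pos hv0 d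
  set s := ε / (l2Norm r + 1)
  have hs : 0 < s := div_pos hε (by linarith [l2Norm_nonneg r])
  refine ⟨g - s • r, Or.inl ⟨hg.sub ((homogeneousSubmodule _ ℝ d).smul_mem s hr), v, hv, ?_⟩, ?_⟩
  · simp only [evalP, map_sub, smul_eval] at hgv hrv ⊢
    nlinarith
  · rw [sub_sub_cancel_left, ← neg_smul, l2Norm_smul, abs_neg, abs_of_pos hs]
    calc s * l2Norm r < s * (l2Norm r + 1) := by gcongr; linarith
      _ = ε := div_mul_cancel₀ _ (by linarith [l2Norm_nonneg r])

end Copositivity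

theorem stmt18_general {n p d : ℕ} (hd : 1 ≤ d) (A : Matrix (Fin p) (Fin n) ℝ)
    (C : Set (En n)) (hC : C = {x | ∀ i, 0 ≤ A.mulVec (fun j => x j) i}) :
    IsGenericIn {h : MvPolynomial (Fin n) ℝ | h.IsHomogeneous d}
      {h : MvPolynomial (Fin n) ℝ | h.IsHomogeneous d ∧ Set.Finite (solSet C (evalP h))} := by
  have hd0 : d ≠ 0 := by omega
  have hcone : ∀ c : ℝ, 0 ≤ c → ∀ x ∈ C, c • x ∈ C := hC ▸ smul_mem_setOf_mulVec_nonneg A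
  have hclosed : IsClosed C := hC ▸ isClosed_setOf_mulVec_nonneg A
  refine ⟨fun _ => notCopositive C d ∪ strictlyCopositive C d, fun _ => ⟨?_, ?_, ?_⟩, ?_⟩
  · exact Set.union_subset (fun g hg => hg.1) (fun g hg => hg.1)
  · rintro g (hg | hg)
    · obtain ⟨ε, hε, hball⟩ := exists_l2Ball_subset_notCopositive hg
      exact ⟨ε, hε, fun g' hg' hlt => Or.inl (hball g' hg' hlt)⟩
    · obtain ⟨ε, hε, hball⟩ := exists_l2Ball_subset_strictlyCopositive hclosed hcone hg
      exact ⟨ε, hε, fun g' hg' hlt => Or.inr (hball g' hg' hlt)⟩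
  · exact fun g hg ε hε => exists_l2Norm_sub_lt_mem_union hg hε
  · rintro g ⟨hg, hgD⟩
    refine ⟨hg, ?_⟩
    rcases Set.mem_iInter.mp hgD 0 with hN | hU
    · simp [solSet_eq_empty_of_mem_notCopositive hcone hd0 hN]
    · exact (Set.finite_singleton 0).subset (solSet_subset_zero_of_mem_strictlyCopositive hcone hd0 hU)

/-- For a polyhedral cone `C = {x : Ax ≥ 0}` with `A` of full rank, there is a generic
(residual) set `G_d` in the space `H_d` of homogeneous polynomials of degree `d` such that
`Sol(C,g)` is finite for every `g ∈ G_d`. -/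
theorem stmt18 {n p d : ℕ} (hd : 1 ≤ d) (A : Matrix (Fin p) (Fin n) ℝ)
    (hA : LinearIndependent ℝ A)
    (C : Set (En n)) (hC : C = {x | ∀ i, 0 ≤ A.mulVec (fun j => x j) i}) :
    IsGenericIn {h : MvPolynomial (Fin n) ℝ | h.IsHomogeneous d}
      {h : MvPolynomial (Fin n) ℝ | h.IsHomogeneous d ∧ Set.Finite (solSet C (evalP h))} :=
  stmt18_general hd A C hC

end
end
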